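/- Let A, B, C be an affinely independent triple in the Euclidean plane with incenter I = (a·A + b·B + c·C)/(2s) (where a = dist B C, b = dist C A, c = dist A B, s = (a+b+c)/2) and orthocenter H. Let H_A, H_B, H_C be the orthocenters of triangles BIC, CIA, AIB. Let O_a, O_b, O_c be the circumcenters of triangles H_A B C, H_B C A, H_C A B, and let O_A, O_B, O_C be the circumcenters of triangles A H_B H_C, B H_C H_A, C H_A H_B (all six triples assumed affinely independent). Then the anti-Fuhrmann triangle O_A O_B O_C is the reflection of the Fuhrmann triangle O_a O_b O_c in the midpoint of H and I: O_A = H + I − O_a, O_B = H + I − O_b, and O_C = H + I − O_c. -/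

import Mathlib

/-!
Let `O` be the circumcenter of `ABC` and `M_a, M_b, M_c` the circumcenters of `BIC, CIA, AIB`.
In barycentric coordinates one checks that the `M`'s are the arc midpoints of the circumcircle and
that `I` is the orthocenter of `M_a M_b M_c`, i.e. `I = M_a + M_b + M_c - 2O`.
Euler's relation gives `H = A + B + C - 2O` and `H_A = B + I + C - 2M_a`, so the circle through
`H_A, B, C` is the reflection of the circle `BIC` in the midpoint of `BC`: `O_a = B + C - M_a`.
Hence `H + I - O_a = A + I + M_a - 2O`, and a short inner-product computation, using only that
`B, C, M_a, M_b, M_c` are equidistant from `O` and each `M` from its two vertices and `I`, shows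
that this point is equidistant from `A, H_B, H_C`. The other two vertices follow by cyclic symmetry.
-/

open EuclideanGeometry
open scoped InnerProductSpace

/-- The orthocenter of the triangle with vertices `A`, `B`, `C`. -/
noncomputable def orthocenter3 (A B C : EuclideanSpace ℝ (Fin 2))
    (h : AffineIndependent ℝ ![A, B, C]) : EuclideanSpace ℝ (Fin 2) :=
  Affine.Triangle.orthocenter ⟨![A, B, C], h⟩

/-- The circumcenter of the triangle with vertices `A`, `B`, `C`. -/
noncomputable def circumcenter3 (A B C : EuclideanSpace ℝ (Fin 2))
    (h : AffineIndependent ℝ ![A, B, C]) : EuclideanSpace ℝ (Fin 2) :=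
  Affine.Simplex.circumcenter ⟨![A, B, C], h⟩

/-- The circumradius of the triangle with vertices `A`, `B`, `C`. -/
noncomputable def circumradius3 (A B C : EuclideanSpace ℝ (Fin 2))
    (h : AffineIndependent ℝ ![A, B, C]) : ℝ :=
  Affine.Simplex.circumradius ⟨![A, B, C], h⟩

theorem AffineIndependent.rotate {k V P : Type*} [Ring k] [AddCommGroup V] [Module k V]
    [AddTorsor V P] {A B C : P} (h : AffineIndependent k ![A, B, C]) :
    AffineIndependent k ![B, C, A] := by
  convert h.comp_embedding (finRotate 3).toEmbedding using 1
  ext i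
  fin_cases i <;> rfl

theorem AffineIndependent.dist_lt_dist_add_dist {V P : Type*} [NormedAddCommGroup V]
    [NormedSpace ℝ V] [StrictConvexSpace ℝ V] [MetricSpace P] [NormedAddTorsor V P] {A B C : P}
    (h : AffineIndependent ℝ ![A, B, C]) : dist B C < dist C A + dist A B := by
  rw [add_comm, dist_comm C A, dist_comm A B, dist_lt_dist_add_dist_iff]
  intro hw
  rw [affineIndependent_iff_not_collinear_set] at h
  exact h (Set.insert_comm A B {C} ▸ hw.collinear)

theorem AffineIndependent.dist_add_dist_sub_pos {V P : Type*} [NormedAddCommGroup V]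
    [NormedSpace ℝ V] [StrictConvexSpace ℝ V] [MetricSpace P] [NormedAddTorsor V P] {A B C : P}
    (h : AffineIndependent ℝ ![A, B, C]) :
    0 < dist C A + dist A B - dist B C ∧ 0 < dist A B + dist B C - dist C A ∧
      0 < dist B C + dist C A - dist A B :=
  ⟨sub_pos.2 h.dist_lt_dist_add_dist, sub_pos.2 h.rotate.dist_lt_dist_add_dist,
    sub_pos.2 h.rotate.rotate.dist_lt_dist_add_dist⟩

theorem dist_eq_of_concyclic_of_orthocenter {V : Type*} [NormedAddCommGroup V]
    [InnerProductSpace ℝ V] {O B I Ma Mb Mc : V} {r : ℝ} (A : V) (hB : dist B O = r)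
    (hMa : dist Ma O = r) (hMb : dist Mb O = r) (hMc : dist Mc O = r)
    (hI : I = Ma + Mb + Mc - (2 : ℝ) • O)
    (hIMa : dist I Ma = dist B Ma) (hIMc : dist I Mc = dist B Mc) :
    dist (A + I + B - (2 : ℝ) • Mc) (A + I + Ma - (2 : ℝ) • O) =
      dist A (A + I + Ma - (2 : ℝ) • O) := by
  subst hB
  obtain ⟨a, rfl⟩ : ∃ a, Ma = O + a := ⟨Ma - O, by abel⟩
  obtain ⟨b, rfl⟩ : ∃ b, Mb = O + b := ⟨Mb - O, by abel⟩
  obtain ⟨c, rfl⟩ : ∃ c, Mc = O + c := ⟨Mc - O, by abel⟩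
  obtain ⟨β, rfl⟩ : ∃ β, B = O + β := ⟨B - O, by abel⟩
  obtain rfl : I = O + (a + b + c) := by rw [hI]; module
  rw [dist_eq_norm, dist_eq_norm, ← sq_eq_sq₀ (norm_nonneg _) (norm_nonneg _),
    show A + (O + (a + b + c)) + (O + β) - (2 : ℝ) • (O + c)
      - (A + (O + (a + b + c)) + (O + a) - (2 : ℝ) • O) = β - a - (2 : ℝ) • c by module,
    show A - (A + (O + (a + b + c)) + (O + a) - (2 : ℝ) • O) = -((2 : ℝ) • a + b + c) by
      module]
  simp only [dist_eq_norm, add_sub_add_left_eq_sub, add_sub_cancel_left] at hMa hMb hMc hIMa hIMc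
  rw [← sq_eq_sq₀ (norm_nonneg _) (norm_nonneg _)] at hMa hMb hMc hIMa hIMc
  simp only [← real_inner_self_eq_norm_sq, inner_add_left, inner_add_right, inner_sub_left,
    inner_sub_right, inner_neg_left, inner_neg_right, real_inner_smul_left, real_inner_smul_right,
    real_inner_comm a β, real_inner_comm c β, real_inner_comm a b, real_inner_comm a c,
    real_inner_comm b c] at *
  linear_combination -hIMa - 2 * hIMc - 2 * hMa + 2 * hMb + 2 * hMc

section Barycentric

variable {V : Type*} [NormedAddCommGroup V] [InnerProductSpace ℝ V]

theorem norm_smul_add_smul_add_smul_sq {x y z : ℝ} (h : x + y + z = 0) (A B C : V) :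
    ‖x • A + y • B + z • C‖ ^ 2 =
      -(x * y * dist A B ^ 2 + y * z * dist B C ^ 2 + z * x * dist C A ^ 2) := by
  have hz : z = -x - y := by linarith
  rw [show x • A + y • B + z • C = x • (A - C) + y • (B - C) by rw [hz]; module,
    hz, dist_eq_norm A B, dist_eq_norm B C, dist_comm, dist_eq_norm A C,
    show A - B = (A - C) - (B - C) by abel, norm_add_sq_real, norm_sub_sq_real,
    norm_smul, norm_smul, real_inner_smul_left, real_inner_smul_right, mul_pow, mul_pow,
    Real.norm_eq_abs, Real.norm_eq_abs, sq_abs, sq_abs]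
  ring

/-- The point with homogeneous barycentric coordinates `(x : y : z)` with respect to `A B C`
(junk value `0` when `x + y + z = 0`). -/
noncomputable def bary (A B C : V) (x y z : ℝ) : V :=
  (x + y + z)⁻¹ • (x • A + y • B + z • C)

theorem dist_bary_sq {A B C P Q : V} {x y z s x' y' z' s' : ℝ}
    (hP : P = bary A B C x y z) (hQ : Q = bary A B C x' y' z')
    (hs : x + y + z = s) (hs' : x' + y' + z' = s') (h0 : s ≠ 0) (h0' : s' ≠ 0) :
    dist P Q ^ 2 = -((x / s - x' / s') * (y / s - y' / s') * dist A B ^ 2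
      + (y / s - y' / s') * (z / s - z' / s') * dist B C ^ 2
      + (z / s - z' / s') * (x / s - x' / s') * dist C A ^ 2) := by
  have hn : x / s + y / s + z / s = 1 := by rw [← add_div, ← add_div, hs, div_self h0]
  have hn' : x' / s' + y' / s' + z' / s' = 1 := by rw [← add_div, ← add_div, hs', div_self h0']
  rw [← norm_smul_add_smul_add_smul_sq (by linear_combination hn - hn'), dist_eq_norm,
    hP, hQ, bary, bary, hs, hs']
  congr 2
  module

theorem bary_one_zero_zero (A B C : V) : bary A B C 1 0 0 = A := by simp [bary]

theorem bary_zero_one_zero (A B C : V) : bary A B C 0 1 0 = B := by simp [bary]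

theorem bary_zero_zero_one (A B C : V) : bary A B C 0 0 1 = C := by simp [bary]

theorem bary_rotate (A B C : V) (x y z : ℝ) : bary B C A y z x = bary A B C x y z := by
  unfold bary
  rw [show y + z + x = x + y + z by ring,
    show y • B + z • C + x • A = x • A + y • B + z • C by abel]

noncomputable def incenter (A B C : V) : V := bary A B C (dist B C) (dist C A) (dist A B)

/-- The midpoint of the arc `BC` of the circumcircle of `ABC` not containing `A`. -/
noncomputable def arcMidpoint (A B C : V) : V :=
  bary A B C (-dist B C ^ 2) (dist C A * (dist C A + dist A B)) (dist A B * (dist C A + dist A B))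

noncomputable def circumcenterBary (A B C : V) : V :=
  bary A B C (dist B C ^ 2 * (dist C A ^ 2 + dist A B ^ 2 - dist B C ^ 2))
    (dist C A ^ 2 * (dist A B ^ 2 + dist B C ^ 2 - dist C A ^ 2))
    (dist A B ^ 2 * (dist B C ^ 2 + dist C A ^ 2 - dist A B ^ 2))

/-- `H + I - O_a`, using `H = A + B + C - 2O` and `O_a = B + C - M_a`. -/
noncomputable def antiFuhrmannPoint (A B C : V) : V :=
  A + incenter A B C + arcMidpoint A B C - (2 : ℝ) • circumcenterBary A B C

theorem circumcenterBary_weights_sum (a b c : ℝ) :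
    a ^ 2 * (b ^ 2 + c ^ 2 - a ^ 2) + b ^ 2 * (c ^ 2 + a ^ 2 - b ^ 2)
        + c ^ 2 * (a ^ 2 + b ^ 2 - c ^ 2) =
      (a + b + c) * (b + c - a) * (c + a - b) * (a + b - c) := by
  ring

theorem incenter_rotate (A B C : V) : incenter B C A = incenter A B C := bary_rotate ..

theorem circumcenterBary_rotate (A B C : V) : circumcenterBary B C A = circumcenterBary A B C :=
  bary_rotate ..

variable {A B C : V} (hT : AffineIndependent ℝ ![A, B, C])
include hT

theorem dist_arcMidpoint :
    dist C (arcMidpoint A B C) = dist B (arcMidpoint A B C) ∧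
      dist (incenter A B C) (arcMidpoint A B C) = dist B (arcMidpoint A B C) := by
  obtain ⟨ha, hb, hc⟩ := hT.dist_add_dist_sub_pos
  unfold arcMidpoint incenter
  set a := dist B C; set b := dist C A; set c := dist A B
  have hp : 0 < a + b + c := by linarith
  have hM : -a ^ 2 + b * (b + c) + c * (b + c) = (a + b + c) * (b + c - a) := by ring
  constructor <;> rw [← sq_eq_sq₀ dist_nonneg dist_nonneg]
  · rw [dist_bary_sq (bary_zero_zero_one A B C).symm rfl (by ring) hM one_ne_zero (by positivity),
      dist_bary_sq (bary_zero_one_zero A B C).symm rfl (by ring) hM one_ne_zero (by positivity)]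
    field_simp
    ring
  · rw [dist_bary_sq rfl rfl rfl hM hp.ne' (by positivity),
      dist_bary_sq (bary_zero_one_zero A B C).symm rfl (by ring) hM one_ne_zero (by positivity)]
    field_simp
    ring

theorem dist_circumcenterBary :
    dist B (circumcenterBary A B C) = dist A (circumcenterBary A B C) ∧
      dist C (circumcenterBary A B C) = dist A (circumcenterBary A B C) := by
  obtain ⟨ha, hb, hc⟩ := hT.dist_add_dist_sub_pos
  unfold circumcenterBary
  set a := dist B C; set b := dist C A; set c := dist A B
  have hp : 0 < a + b + c := by linarith
  have hO := circumcenterBary_weights_sum a b c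
  have hA := dist_bary_sq (bary_one_zero_zero A B C).symm rfl (by ring) hO one_ne_zero
    (by positivity)
  constructor <;> rw [← sq_eq_sq₀ dist_nonneg dist_nonneg, hA]
  · rw [dist_bary_sq (bary_zero_one_zero A B C).symm rfl (by ring) hO one_ne_zero (by positivity)]
    field_simp
    ring
  · rw [dist_bary_sq (bary_zero_zero_one A B C).symm rfl (by ring) hO one_ne_zero (by positivity)]
    field_simp
    ring

theorem dist_arcMidpoint_circumcenterBary :
    dist (arcMidpoint A B C) (circumcenterBary A B C) = dist A (circumcenterBary A B C) := by
  obtain ⟨ha, hb, hc⟩ := hT.dist_add_dist_sub_pos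
  unfold arcMidpoint circumcenterBary
  set a := dist B C; set b := dist C A; set c := dist A B
  have hp : 0 < a + b + c := by linarith
  have hO := circumcenterBary_weights_sum a b c
  rw [← sq_eq_sq₀ dist_nonneg dist_nonneg,
    dist_bary_sq rfl rfl (s := (a + b + c) * (b + c - a)) (by ring) hO (by positivity)
      (by positivity),
    dist_bary_sq (bary_one_zero_zero A B C).symm rfl (by ring) hO one_ne_zero (by positivity)]
  field_simp
  ring

theorem incenter_eq_sum_arcMidpoint_sub_two_smul_circumcenterBary :
    incenter A B C = arcMidpoint A B C + arcMidpoint B C A + arcMidpoint C A B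
      - (2 : ℝ) • circumcenterBary A B C := by
  obtain ⟨ha, hb, hc⟩ := hT.dist_add_dist_sub_pos
  unfold incenter arcMidpoint circumcenterBary bary
  set a := dist B C; set b := dist C A; set c := dist A B
  have hp : 0 < a + b + c := by linarith
  rw [show -a ^ 2 + b * (b + c) + c * (b + c) = (a + b + c) * (b + c - a) by ring,
    show -b ^ 2 + c * (c + a) + a * (c + a) = (a + b + c) * (c + a - b) by ring,
    show -c ^ 2 + a * (a + b) + b * (a + b) = (a + b + c) * (a + b - c) by ring,
    circumcenterBary_weights_sum]
  match_scalars <;> field_simp <;> ring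

theorem dist_antiFuhrmannPoint :
    dist (C + incenter A B C + A - (2 : ℝ) • arcMidpoint B C A) (antiFuhrmannPoint A B C) =
        dist A (antiFuhrmannPoint A B C) ∧
      dist (A + incenter A B C + B - (2 : ℝ) • arcMidpoint C A B) (antiFuhrmannPoint A B C) =
        dist A (antiFuhrmannPoint A B C) := by
  have hIb : incenter B C A = incenter A B C := incenter_rotate A B C
  have hIc : incenter C A B = incenter A B C := (incenter_rotate B C A).trans hIb
  have hOb : circumcenterBary B C A = circumcenterBary A B C := circumcenterBary_rotate A B C
  have hOc : circumcenterBary C A B = circumcenterBary A B C :=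
    (circumcenterBary_rotate B C A).trans hOb
  have hI := incenter_eq_sum_arcMidpoint_sub_two_smul_circumcenterBary hT
  obtain ⟨hBO, hCO⟩ := dist_circumcenterBary hT
  have hMaO := dist_arcMidpoint_circumcenterBary hT
  have hMbO := dist_arcMidpoint_circumcenterBary hT.rotate
  have hMcO := dist_arcMidpoint_circumcenterBary hT.rotate.rotate
  rw [hOb, hBO] at hMbO
  rw [hOc, hCO] at hMcO
  obtain ⟨hCMa, hIMa⟩ := dist_arcMidpoint hT
  obtain ⟨-, hIMb⟩ := dist_arcMidpoint hT.rotate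
  obtain ⟨hBMc, hIMc⟩ := dist_arcMidpoint hT.rotate.rotate
  rw [hIb] at hIMb
  rw [hIc] at hIMc
  rw [show C + incenter A B C + A = A + incenter A B C + C by abel]
  exact ⟨dist_eq_of_concyclic_of_orthocenter A hCO hMaO hMcO hMbO (by rw [hI]; abel)
      (hIMa.trans hCMa.symm) hIMb,
    dist_eq_of_concyclic_of_orthocenter A hBO hMaO hMbO hMcO hI hIMa (hIMc.trans hBMc.symm)⟩

end Barycentric

local notation "ℝ²" => EuclideanSpace ℝ (Fin 2)

theorem circumcenter3_eq_of_dist_eq {P Q R X : ℝ²} (h : AffineIndependent ℝ ![P, Q, R])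
    (hQ : dist Q X = dist P X) (hR : dist R X = dist P X) : X = circumcenter3 P Q R h := by
  refine Affine.Simplex.eq_circumcenter_of_dist_eq (s := ⟨![P, Q, R], h⟩) ?_ (r := dist P X) ?_
  · rw [Affine.Simplex.span_eq_top _ finrank_euclideanSpace_fin]
    trivial
  · intro i
    fin_cases i
    exacts [rfl, hQ, hR]

theorem dist_circumcenter3 {P Q R : ℝ²} (h : AffineIndependent ℝ ![P, Q, R]) :
    dist Q (circumcenter3 P Q R h) = dist P (circumcenter3 P Q R h) ∧
      dist R (circumcenter3 P Q R h) = dist P (circumcenter3 P Q R h) :=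
  let s : Affine.Simplex ℝ ℝ² 2 := ⟨![P, Q, R], h⟩
  ⟨(s.dist_circumcenter_eq_circumradius 1).trans (s.dist_circumcenter_eq_circumradius 0).symm,
    (s.dist_circumcenter_eq_circumradius 2).trans (s.dist_circumcenter_eq_circumradius 0).symm⟩

theorem circumcenter3_rotate {A B C : ℝ²} (h : AffineIndependent ℝ ![A, B, C])
    (h' : AffineIndependent ℝ ![B, C, A]) : circumcenter3 B C A h' = circumcenter3 A B C h := by
  obtain ⟨hB, hC⟩ := dist_circumcenter3 h
  exact (circumcenter3_eq_of_dist_eq h' (hC.trans hB.symm) hB.symm).symm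

theorem orthocenter3_eq {P Q R : ℝ²} (h : AffineIndependent ℝ ![P, Q, R]) :
    orthocenter3 P Q R h = P + Q + R - (2 : ℝ) • circumcenter3 P Q R h := by
  rw [orthocenter3, circumcenter3, Affine.Triangle.orthocenter_eq_mongePoint,
    Affine.Simplex.mongePoint_eq_smul_vsub_vadd_circumcenter, Finset.centroid_def,
    Finset.affineCombination_eq_linear_combination _ _ _
      (Finset.sum_centroidWeights_eq_one_of_nonempty ℝ _ Finset.univ_nonempty)]
  norm_num [Finset.centroidWeights]
  rw [Fin.sum_univ_three]
  simp only [Matrix.cons_val_zero, Matrix.cons_val_one, Matrix.cons_val_two, Matrix.head_cons,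
    Matrix.tail_cons]
  module

theorem orthocenter3_rotate {A B C : ℝ²} (h : AffineIndependent ℝ ![A, B, C])
    (h' : AffineIndependent ℝ ![B, C, A]) : orthocenter3 B C A h' = orthocenter3 A B C h := by
  rw [orthocenter3_eq, orthocenter3_eq, circumcenter3_rotate h]
  abel

theorem circumcenter3_orthocenter3 {P Q R : ℝ²} (h : AffineIndependent ℝ ![Q, P, R])
    (h' : AffineIndependent ℝ ![orthocenter3 Q P R h, Q, R]) :
    circumcenter3 (orthocenter3 Q P R h) Q R h' = Q + R - circumcenter3 Q P R h := by
  set O := circumcenter3 Q P R h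
  obtain ⟨hP, hR⟩ := dist_circumcenter3 h
  have hQX : dist Q (Q + R - O) = dist R O := by
    rw [dist_eq_norm, dist_eq_norm', show Q - (Q + R - O) = O - R by abel]
  have hRX : dist R (Q + R - O) = dist Q O := by
    rw [dist_eq_norm, dist_eq_norm', show R - (Q + R - O) = O - Q by abel]
  have hHX : dist (Q + P + R - (2 : ℝ) • O) (Q + R - O) = dist P O := by
    rw [dist_eq_norm, dist_eq_norm,
      show Q + P + R - (2 : ℝ) • O - (Q + R - O) = P - O by module]
  symm
  apply circumcenter3_eq_of_dist_eq <;> rw [orthocenter3_eq, hHX, hP]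
  exacts [hQX.trans hR, hRX]

theorem circumcenter3_eq_arcMidpoint {A B C I : ℝ²} (hT : AffineIndependent ℝ ![A, B, C])
    (hI : I = incenter A B C) (h : AffineIndependent ℝ ![B, I, C]) :
    circumcenter3 B I C h = arcMidpoint A B C := by
  obtain ⟨hC, hI'⟩ := dist_arcMidpoint hT
  exact (circumcenter3_eq_of_dist_eq h (hI ▸ hI') hC).symm

theorem circumcenter3_eq_circumcenterBary {A B C : ℝ²} (hT : AffineIndependent ℝ ![A, B, C]) :
    circumcenter3 A B C hT = circumcenterBary A B C :=
  (circumcenter3_eq_of_dist_eq hT (dist_circumcenterBary hT).1 (dist_circumcenterBary hT).2).symm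

theorem circumcenter3_antiFuhrmann_eq {A B C I : ℝ²} (hT : AffineIndependent ℝ ![A, B, C])
    (hI : I = incenter A B C) (hBIC : AffineIndependent ℝ ![B, I, C])
    (hCIA : AffineIndependent ℝ ![C, I, A]) (hAIB : AffineIndependent ℝ ![A, I, B])
    (hFa : AffineIndependent ℝ ![orthocenter3 B I C hBIC, B, C])
    (hFA : AffineIndependent ℝ ![A, orthocenter3 C I A hCIA, orthocenter3 A I B hAIB]) :
    circumcenter3 A (orthocenter3 C I A hCIA) (orthocenter3 A I B hAIB) hFA =
      orthocenter3 A B C hT + I - circumcenter3 (orthocenter3 B I C hBIC) B C hFa := by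
  have hMb := circumcenter3_eq_arcMidpoint hT.rotate (hI.trans (incenter_rotate A B C).symm) hCIA
  have hMc := circumcenter3_eq_arcMidpoint hT.rotate.rotate
    (hI.trans ((incenter_rotate B C A).trans (incenter_rotate A B C)).symm) hAIB
  have hX : orthocenter3 A B C hT + I - circumcenter3 (orthocenter3 B I C hBIC) B C hFa =
      antiFuhrmannPoint A B C := by
    rw [circumcenter3_orthocenter3, orthocenter3_eq hT, circumcenter3_eq_circumcenterBary hT,
      circumcenter3_eq_arcMidpoint hT hI hBIC, antiFuhrmannPoint, hI]
    abel
  obtain ⟨hHB, hHC⟩ := dist_antiFuhrmannPoint hT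
  rw [hX]
  symm
  apply circumcenter3_eq_of_dist_eq
  · rwa [orthocenter3_eq, hMb, hI]
  · rwa [orthocenter3_eq, hMc, hI]

/-- The anti-Fuhrmann triangle is the reflection of the Fuhrmann triangle in the
midpoint of `H` and `I`. -/
theorem anti_fuhrmann_reflection
    (A B C I H HA HB HC Oa Ob Oc OA OB OC : EuclideanSpace ℝ (Fin 2))
    (hABC : AffineIndependent ℝ ![A, B, C])
    (a b c s : ℝ)
    (ha : a = dist B C) (hb : b = dist C A) (hc : c = dist A B)
    (hs : s = (a + b + c) / 2)
    (hI : I = (2 * s)⁻¹ • (a • A + b • B + c • C))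
    (hH : H = orthocenter3 A B C hABC)
    (hBIC : AffineIndependent ℝ ![B, I, C])
    (hCIA : AffineIndependent ℝ ![C, I, A])
    (hAIB : AffineIndependent ℝ ![A, I, B])
    (hHA : HA = orthocenter3 B I C hBIC)
    (hHB : HB = orthocenter3 C I A hCIA)
    (hHC : HC = orthocenter3 A I B hAIB)
    (ha' : AffineIndependent ℝ ![HA, B, C])
    (hb' : AffineIndependent ℝ ![HB, C, A])
    (hc' : AffineIndependent ℝ ![HC, A, B])
    (hOa : Oa = circumcenter3 HA B C ha')
    (hOb : Ob = circumcenter3 HB C A hb')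
    (hOc : Oc = circumcenter3 HC A B hc')
    (h1 : AffineIndependent ℝ ![A, HB, HC])
    (h2 : AffineIndependent ℝ ![B, HC, HA])
    (h3 : AffineIndependent ℝ ![C, HA, HB])
    (hOA : OA = circumcenter3 A HB HC h1)
    (hOB : OB = circumcenter3 B HC HA h2)
    (hOC : OC = circumcenter3 C HA HB h3) :
    OA = H + I - Oa ∧ OB = H + I - Ob ∧ OC = H + I - Oc := by
  have hIa : I = incenter A B C := by
    rw [hI, hs, ha, hb, hc, incenter, bary, mul_div_cancel₀ _ two_ne_zero]
  have hIb : I = incenter B C A := hIa.trans (incenter_rotate A B C).symm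
  have hIc : I = incenter C A B := hIb.trans (incenter_rotate B C A).symm
  subst hH hHA hHB hHC hOa hOb hOc hOA hOB hOC
  refine ⟨circumcenter3_antiFuhrmann_eq hABC hIa hBIC hCIA hAIB ha' h1, ?_, ?_⟩
  · rw [← orthocenter3_rotate hABC hABC.rotate]
    exact circumcenter3_antiFuhrmann_eq hABC.rotate hIb hCIA hAIB hBIC hb' h2
  · rw [← orthocenter3_rotate hABC hABC.rotate,
      ← orthocenter3_rotate hABC.rotate hABC.rotate.rotate]
    exact circumcenter3_antiFuhrmann_eq hABC.rotate.rotate hIc hAIB hBIC hCIA hc' h3
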